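/- arXiv:math/0605449 — 2 statements merged into one kernel-verified Lean document; each statement's English description precedes it below -/
import Mathlib

section
/- ℝ-collection passes to direct limits: if ⟨M_ν, π_{νλ}⟩_{ν<λ} is a commutative directed system of transitive ∈-structures each containing ℝ∪{ℝ}, with Σ₁-elementary maps fixing ℝ∪{ℝ} pointwise, and each M_ν satisfies ℝ-collection, then the direct limit M_λ satisfies ℝ-collection. -/
/-- Σ₀ (Δ₀) formulas of the language of set theory: atomic membership and equality,
negation, conjunction, and bounded existential quantification (∃ v_n ∈ v_i). -/
inductive Fml : ℕ → Type
  | mem {n : ℕ} (i j : Fin n) : Fml n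
  | eq {n : ℕ} (i j : Fin n) : Fml n
  | not {n : ℕ} : Fml n → Fml n
  | and {n : ℕ} : Fml n → Fml n → Fml n
  | bex {n : ℕ} (i : Fin n) : Fml (n + 1) → Fml n

/-- Satisfaction of a Σ₀ formula in a structure (M, E) under a valuation. -/
def Sat (M : Type*) (E : M → M → Prop) : {n : ℕ} → Fml n → (Fin n → M) → Prop
  | _, .mem i j, v => E (v i) (v j)
  | _, .eq i j, v => v i = v j
  | _, .not φ, v => ¬ Sat M E φ v
  | _, .and φ ψ, v => Sat M E φ v ∧ Sat M E ψ v
  | _, .bex i φ, v => ∃ y, E y (v i) ∧ Sat M E φ (Fin.snoc v y)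

/-- ℝ-collection for a structure (M, E) containing the reals via the coding `realM`:
for every Σ₀ formula φ with parameters, if for every real x there is a witness v with
φ(x, v), then there is a single w ∈ M collecting witnesses: for every real x there is
v ∈ w (i.e. E v w) with φ(x, v). -/
def RColl (M : Type*) (E : M → M → Prop) (realM : (ℕ → ℕ) → M) : Prop :=
  ∀ (k : ℕ) (φ : Fml (k + 2)) (p : Fin k → M),
    (∀ x : ℕ → ℕ, ∃ v : M, Sat M E φ (Fin.snoc (Fin.snoc p (realM x)) v)) →
    ∃ w : M, ∀ x : ℕ → ℕ, ∃ v : M,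
      E v w ∧ Sat M E φ (Fin.snoc (Fin.snoc p (realM x)) v)


/-- Variable renaming for Σ₀ formulas. -/
def Fml.ren : ∀ {n m : ℕ}, (Fin n → Fin m) → Fml n → Fml m
  | _, _, ρ, .mem i j => .mem (ρ i) (ρ j)
  | _, _, ρ, .eq i j => .eq (ρ i) (ρ j)
  | _, _, ρ, .not φ => .not (φ.ren ρ)
  | _, _, ρ, .and φ ψ => .and (φ.ren ρ) (ψ.ren ρ)
  | _, _, ρ, .bex i φ =>
      .bex (ρ i) (φ.ren (Fin.snoc (Fin.castSucc ∘ ρ) (Fin.last _)))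

lemma snoc_comp_ren {M : Type*} {n m : ℕ} (ρ : Fin n → Fin m) (v : Fin m → M) (y : M) :
    (Fin.snoc v y : Fin (m+1) → M) ∘ (Fin.snoc (Fin.castSucc ∘ ρ) (Fin.last m)) =
      Fin.snoc (v ∘ ρ) y := by
  funext j
  refine Fin.lastCases ?_ (fun j' => ?_) j
  · simp
  · simp [Fin.snoc_castSucc]

lemma sat_ren (M : Type*) (E : M → M → Prop) :
    ∀ {n m : ℕ} (φ : Fml n) (ρ : Fin n → Fin m) (v : Fin m → M),
      Sat M E (φ.ren ρ) v ↔ Sat M E φ (v ∘ ρ)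
  | _, _, .mem i j, ρ, v => Iff.rfl
  | _, _, .eq i j, ρ, v => Iff.rfl
  | _, _, .not φ, ρ, v => by
      simpa [Fml.ren, Sat] using (sat_ren M E φ ρ v).not
  | _, _, .and φ ψ, ρ, v => by
      simp [Fml.ren, Sat, sat_ren M E φ ρ v, sat_ren M E ψ ρ v]
  | _, _, .bex i φ, ρ, v => by
      simp only [Fml.ren, Sat]
      refine exists_congr fun y => and_congr Iff.rfl ?_
      rw [sat_ren, snoc_comp_ren]


lemma sat_key {N : Type*} (EN : N → N → Prop) {k : ℕ} (φ : Fml (k+2))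
    (vv : Fin (k+2) → N) (y : N) :
    Sat N EN (Fml.and (.mem (Fin.last (k+2)) (Fin.last (k+1)).castSucc)
        (φ.ren (Fin.snoc (fun j : Fin (k+1) => j.castSucc.castSucc) (Fin.last (k+2)))))
      (Fin.snoc vv y) ↔
      EN y (vv (Fin.last (k+1))) ∧
        Sat N EN φ (Fin.snoc (fun j : Fin (k+1) => vv j.castSucc) y) := by
  have hcomp : (Fin.snoc vv y : Fin (k+3) → N) ∘
      (Fin.snoc (fun j : Fin (k+1) => j.castSucc.castSucc) (Fin.last (k+2))) =
      Fin.snoc (fun j : Fin (k+1) => vv j.castSucc) y := by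
    funext j
    refine Fin.lastCases ?_ (fun j' => ?_) j
    · simp
    · simp [Fin.snoc_castSucc]
  simp only [Sat, sat_ren, hcomp, Fin.snoc_last, Fin.snoc_castSucc]

/-- ℝ-collection passes to direct limits: if ⟨M_ν, f_{νν'}⟩ is a commutative
directed system of transitive ∈-structures containing ℝ∪{ℝ}, with Σ₁-elementary maps
fixing ℝ∪{ℝ} pointwise, each M_ν satisfying ℝ-collection, then the direct limit L
(characterized by exhaustiveness of the Σ₁-elementary limit maps g ν) satisfies
ℝ-collection. -/
theorem rColl_directLimit {ι : Type*} [Preorder ι]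
    (hdir : ∀ i j : ι, ∃ k : ι, i ≤ k ∧ j ≤ k)
    (M : ι → Type*) (E : ∀ i, M i → M i → Prop)
    (realI : ∀ i, (ℕ → ℕ) → M i) (RI : ∀ i, M i)
    (f : ∀ i j, i ≤ j → M i → M j)
    (hcomm : ∀ (i j k : ι) (hij : i ≤ j) (hjk : j ≤ k) (a : M i),
      f j k hjk (f i j hij a) = f i k (le_trans hij hjk) a)
    (hfreal : ∀ (i j : ι) (hij : i ≤ j) (x : ℕ → ℕ), f i j hij (realI i x) = realI j x)
    (hfR : ∀ (i j : ι) (hij : i ≤ j), f i j hij (RI i) = RI j)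
    (hfel : ∀ (i j : ι) (hij : i ≤ j) (n : ℕ) (φ : Fml (n + 1)) (v : Fin n → M i),
      (∃ y : M i, Sat (M i) (E i) φ (Fin.snoc v y)) ↔
      (∃ y : M j, Sat (M j) (E j) φ (Fin.snoc (f i j hij ∘ v) y)))
    (L : Type*) (EL : L → L → Prop) (realL : (ℕ → ℕ) → L) (RL : L)
    (g : ∀ i, M i → L)
    (hg : ∀ (i j : ι) (hij : i ≤ j) (a : M i), g j (f i j hij a) = g i a)
    (hgreal : ∀ (i : ι) (x : ℕ → ℕ), g i (realI i x) = realL x)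
    (hgR : ∀ i : ι, g i (RI i) = RL)
    (hsurj : ∀ y : L, ∃ (i : ι) (a : M i), g i a = y)
    (hgel : ∀ (i : ι) (n : ℕ) (φ : Fml (n + 1)) (v : Fin n → M i),
      (∃ y : M i, Sat (M i) (E i) φ (Fin.snoc v y)) ↔
      (∃ y : L, Sat L EL φ (Fin.snoc (g i ∘ v) y)))
    (hcoll : ∀ i : ι, RColl (M i) (E i) (realI i)) :
    RColl L EL realL := by
  intro k φ p hyp
  -- lift the parameters to a single index
  haveI : IsDirected ι (· ≤ ·) := ⟨hdir⟩
  obtain ⟨i₀, -, -⟩ := hsurj (realL fun _ => 0)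
  haveI : Nonempty ι := ⟨i₀⟩
  choose idx a ha using fun j => hsurj (p j)
  obtain ⟨i, hi⟩ := Finite.exists_le idx
  set q : Fin k → M i := fun j => f (idx j) i (hi j) (a j) with hq
  have hgq : g i ∘ q = p := by
    funext j
    simp [hq, hg, ha]
  -- transfer the hypothesis down to M i
  have hyp' : ∀ x : ℕ → ℕ, ∃ v : M i,
      Sat (M i) (E i) φ (Fin.snoc (Fin.snoc q (realI i x)) v) := by
    intro x
    rw [hgel i (k+1) φ (Fin.snoc q (realI i x)), Fin.comp_snoc, hgq, hgreal]
    exact hyp x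
  obtain ⟨w, hw⟩ := hcoll i k φ q hyp'
  refine ⟨g i w, fun x => ?_⟩
  -- encode "∃ v, E v w ∧ φ" as a Σ₁ statement over k+2 free variables
  set ρ : Fin (k+2) → Fin (k+3) :=
    Fin.snoc (fun j : Fin (k+1) => j.castSucc.castSucc) (Fin.last (k+2)) with hρ
  set ψ : Fml (k+3) :=
    .and (.mem (Fin.last (k+2)) (Fin.last (k+1)).castSucc) (φ.ren ρ) with hψ
  set u : Fin (k+2) → M i := Fin.snoc (Fin.snoc q (realI i x)) w with hu
  have fwd : ∃ y : M i, Sat (M i) (E i) ψ (Fin.snoc u y) := by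
    obtain ⟨v, hv1, hv2⟩ := hw x
    refine ⟨v, (sat_key (E i) φ u v).2 ⟨?_, ?_⟩⟩
    · simpa [hu] using hv1
    · have : (fun j : Fin (k+1) => u j.castSucc) = Fin.snoc q (realI i x) := by
        funext j; simp [hu]
      rw [this]; exact hv2
  obtain ⟨y, hy⟩ := (hgel i (k+2) ψ u).1 fwd
  rw [sat_key EL φ (g i ∘ u) y] at hy
  obtain ⟨hy1, hy2⟩ := hy
  refine ⟨y, ?_, ?_⟩
  · simpa [hu] using hy1
  · have : (fun j : Fin (k+1) => (g i ∘ u) j.castSucc) = Fin.snoc p (realL x) := by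
      funext j
      refine Fin.lastCases ?_ (fun j' => ?_) j
      · simp [hu, hgreal]
      · simp [hu, Fin.snoc_castSucc]
        have := congrFun hgq j'
        simpa using this
    rw [this] at hy2
    exact hy2
end

section
/- Let Γ be a pointclass such that there is a total function k : ℝ → OR^M cofinal in the ordinals of a transitive structure M, with Γ-definable graph, and such that M is the increasing union of a Σ₁-definable hierarchy of transitive sets S_η each containing ℝ. Then every Σ₁(M, real-parameters) set of reals Q is in ∃^ℝ Π₁(M, real-parameters): Q(y) ⟺ ∃x ∈ ℝ ∀S ∀η [(η = k(x) ∧ S = S_η) → φ(y,z)^S], where φ is the Σ₁ definition of Q with real parameter z. -/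
/-- Satisfaction of a Σ₀ formula relativized to a subset D ⊆ M (the structure with
domain D and the restricted membership relation). -/
def SatIn (M : Type*) (E : M → M → Prop) (D : Set M) :
    {n : ℕ} → Fml n → (Fin n → M) → Prop
  | _, .mem i j, v => E (v i) (v j)
  | _, .eq i j, v => v i = v j
  | _, .not φ, v => ¬ SatIn M E D φ v
  | _, .and φ ψ, v => SatIn M E D φ v ∧ SatIn M E D ψ v
  | _, .bex i φ, v => ∃ y ∈ D, E y (v i) ∧ SatIn M E D φ (Fin.snoc v y)

/-- Σ₀ absoluteness for transitive domains. -/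
theorem satIn_iff_sat {M : Type*} (E : M → M → Prop) (D : Set M)
    (hD : ∀ a ∈ D, ∀ b : M, E b a → b ∈ D) :
    ∀ {n : ℕ} (φ : Fml n) (v : Fin n → M), (∀ i, v i ∈ D) →
      (SatIn M E D φ v ↔ Sat M E φ v) := by
  intro n φ
  induction φ with
  | mem i j => intro v hv; rfl
  | eq i j => intro v hv; rfl
  | not φ ih => intro v hv; simp [Sat, SatIn, ih v hv]
  | and φ ψ ih1 ih2 => intro v hv; simp [Sat, SatIn, ih1 v hv, ih2 v hv]
  | bex i φ ih =>
    intro v hv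
    constructor
    · rintro ⟨y, hyD, hyE, hsat⟩
      refine ⟨y, hyE, ?_⟩
      rw [← ih (Fin.snoc v y) ?_]
      · exact hsat
      · intro j
        refine Fin.lastCases ?_ ?_ j
        · simpa using hyD
        · intro j; simpa using hv j
    · rintro ⟨y, hyE, hsat⟩
      have hyD : y ∈ D := hD (v i) (hv i) y hyE
      refine ⟨y, hyD, hyE, ?_⟩
      rw [ih (Fin.snoc v y) ?_]
      · exact hsat
      · intro j
        refine Fin.lastCases ?_ ?_ j
        · simpa using hyD
        · intro j; simpa using hv j

/-- Suppose the transitive structure M is the increasing union of a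
Σ₁-definable hierarchy of transitive sets S_η (η ranging over the ordinals of M), each
containing ℝ, with Σ₁-reflection, and suppose k : ℝ → OR^M is a total cofinal function
with Σ₁-definable graph.  Then every Σ₁(M, real-parameters) set of reals Q is in
∃^ℝΠ₁(M, real-parameters):
Q(y) ⟺ ∃x ∈ ℝ ∀η [(η = k(x)) → φ(y,z)^{S_η}]. -/
theorem sigma1_subset_existsR_pi1 {M : Type*}
    (E : M → M → Prop) (realM : (ℕ → ℕ) → M) (RM : M) (isOrd : M → Prop)
    (S : M → Set M)
    (hmono : ∀ η η' : M, isOrd η → isOrd η' → E η η' → S η ⊆ S η')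
    (htrans : ∀ (η : M), isOrd η → ∀ a ∈ S η, ∀ b : M, E b a → b ∈ S η)
    (hcover : ∀ a : M, ∃ η : M, isOrd η ∧ a ∈ S η)
    (hrealS : ∀ (η : M), isOrd η → (∀ x : ℕ → ℕ, realM x ∈ S η) ∧ RM ∈ S η)
    (hreflect : ∀ (kk : ℕ) (φ : Fml (kk + 1)) (v : Fin kk → M),
      (∃ u : M, Sat M E φ (Fin.snoc v u)) →
      ∃ η : M, isOrd η ∧ (∀ i, v i ∈ S η) ∧
        ∃ u ∈ S η, SatIn M E (S η) φ (Fin.snoc v u))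
    (k : (ℕ → ℕ) → M)
    (hkord : ∀ x : ℕ → ℕ, isOrd (k x))
    (hkcof : ∀ b : M, isOrd b → ∃ x : ℕ → ℕ, b = k x ∨ E b (k x))
    (hkdef : ∃ (ψ : Fml 4) (zk : ℕ → ℕ), ∀ (x : ℕ → ℕ) (a : M),
      k x = a ↔ ∃ u : M, Sat M E ψ ![realM x, realM zk, a, u]) :
    ∀ (φ : Fml 4) (z : ℕ → ℕ) (y : ℕ → ℕ),
      (∃ u : M, Sat M E φ ![realM y, realM z, RM, u]) ↔
      (∃ x : ℕ → ℕ, ∀ η : M, η = k x →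
        ∃ u ∈ S η, SatIn M E (S η) φ ![realM y, realM z, RM, u]) := by
  intro φ z y
  have hsnoc : ∀ u : M, (![realM y, realM z, RM, u] : Fin 4 → M)
      = Fin.snoc ![realM y, realM z, RM] u := by
    intro u
    funext j
    fin_cases j <;> simp [Fin.snoc] <;> rfl
  constructor
  · rintro ⟨u, hu⟩
    obtain ⟨η₀, hη₀ord, hv, u', hu'S, hsat⟩ :=
      hreflect 3 φ ![realM y, realM z, RM] ⟨u, by rwa [← hsnoc]⟩
    obtain ⟨x, hx⟩ := hkcof η₀ hη₀ord
    refine ⟨x, ?_⟩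
    rintro η rfl
    have hsub : S η₀ ⊆ S (k x) := by
      rcases hx with h | h
      · rw [← h]
      · exact hmono η₀ (k x) hη₀ord (hkord x) h
    have htr := htrans (k x) (hkord x)
    have hvals : ∀ i, (![realM y, realM z, RM, u'] : Fin 4 → M) i ∈ S (k x) := by
      intro i
      fin_cases i
      · exact (hrealS (k x) (hkord x)).1 y
      · exact (hrealS (k x) (hkord x)).1 z
      · exact (hrealS (k x) (hkord x)).2
      · exact hsub hu'S
    have htr0 := htrans η₀ hη₀ord
    have hvals0 : ∀ i, (![realM y, realM z, RM, u'] : Fin 4 → M) i ∈ S η₀ := by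
      intro i
      fin_cases i
      · exact (hrealS η₀ hη₀ord).1 y
      · exact (hrealS η₀ hη₀ord).1 z
      · exact (hrealS η₀ hη₀ord).2
      · exact hu'S
    refine ⟨u', hsub hu'S, ?_⟩
    rw [satIn_iff_sat E (S (k x)) htr φ _ hvals]
    rw [← satIn_iff_sat E (S η₀) htr0 φ _ hvals0]
    rwa [hsnoc]
  · rintro ⟨x, hx⟩
    obtain ⟨u, huS, hsat⟩ := hx (k x) rfl
    have hvals : ∀ i, (![realM y, realM z, RM, u] : Fin 4 → M) i ∈ S (k x) := by
      intro i
      fin_cases i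
      · exact (hrealS (k x) (hkord x)).1 y
      · exact (hrealS (k x) (hkord x)).1 z
      · exact (hrealS (k x) (hkord x)).2
      · exact huS
    exact ⟨u, (satIn_iff_sat E (S (k x)) (htrans (k x) (hkord x)) φ _ hvals).mp hsat⟩
end
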